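/- arXiv:1212.6042 — 7 statements merged into one kernel-verified Lean document; each statement's English description precedes it below -/
import Mathlib

section
/- For z in the upper half plane (or any complex z with z ∉ {0,1}), the Bloch–Wigner function D(z) = Im(Li₂(z)) + arg(1−z)·log|z| satisfies D(z) = D(1 − 1/z). -/
/-!
Differentiating under the integral sign gives `Li₂'(z) = -log(1 - z) / z` off the cut `[1, ∞)`,
so `Li₂(z) - Li₂(1 - 1/z) + log z · log(1 - z) - (log z)² / 2` is constant on the upper
half-plane; at the fixed point `e^{iπ/3}` of `z ↦ 1 - 1/z` it equals `π² / 6`. The imaginary part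
of this functional equation is `D(z) = D(1 - 1/z)`, and the lower half-plane follows from
`D(z̄) = -D(z)`. On the real line `D` vanishes, also at `0` and `1`, which `z ↦ 1 - 1/z` swaps
since `1/0 = 0`: the imaginary part of the integrand of `Li₂(x)` is `π/t` on `(1/x, 1]` and `0`
elsewhere, so `Im Li₂(x) = -π log x` cancels `arg(1 - x) · log|x|`.
-/

/-- The dilogarithm `Li₂(z)`, defined for `z ∈ ℂ \ [1,∞)` by the integral
`Li₂(z) = -∫₀¹ log(1 - z t)/t dt` (the analytic continuation of `∑ zⁿ/n²`). -/
noncomputable def Li2 (z : ℂ) : ℂ :=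
  -∫ t in (0:ℝ)..1, Complex.log (1 - z * t) / t

/-- The Bloch–Wigner function `D(z) = Im(Li₂(z)) + arg(1−z)·log|z|`. -/
noncomputable def BlochWigner (z : ℂ) : ℝ :=
  (Li2 z).im + (1 - z).arg * Real.log ‖z‖

open Complex MeasureTheory Set intervalIntegral Filter Metric
open scoped Real ComplexConjugate

lemma one_sub_mem_slitPlane_of_im_ne_zero {z : ℂ} (hz : z.im ≠ 0) : 1 - z ∈ slitPlane :=
  mem_slitPlane_iff.2 (Or.inr (by simpa using hz))

lemma im_one_sub_one_div (z : ℂ) : (1 - 1 / z).im = z.im / normSq z := by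
  rw [sub_im, one_im, one_div, inv_im, zero_sub, neg_div, neg_neg]

lemma one_sub_mul_ofReal_mem_slitPlane {z : ℂ} (hz : 1 - z ∈ slitPlane) {t : ℝ}
    (ht : t ∈ Icc 0 1) : 1 - z * t ∈ slitPlane := by
  have := starConvex_one_slitPlane.add_smul_mem (y := -z) (by rwa [← sub_eq_add_neg]) ht.1 ht.2
  rwa [smul_neg, real_smul, mul_comm, ← sub_eq_add_neg] at this

lemma intervalIntegrable_log_one_sub_mul (z : ℂ) (a b : ℝ) :
    IntervalIntegrable (fun t : ℝ => log (1 - z * t)) volume a b := by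
  have hmero : MeromorphicOn (fun t : ℝ => 1 - z * t) (uIcc a b) := fun t _ =>
    (analyticAt_const.sub (analyticAt_const.mul (ofRealCLM.analyticAt t))).meromorphicAt
  refine (hmero.intervalIntegrable_log_norm.abs.add
    (_root_.intervalIntegrable_const (c := π))).mono_fun'
    (measurable_log.comp (by fun_prop)).aestronglyMeasurable (ae_of_all _ fun t => ?_)
  calc ‖log (1 - z * t)‖ ≤ |(log (1 - z * t)).re| + |(log (1 - z * t)).im| :=
        norm_le_abs_re_add_abs_im _
    _ ≤ _ := by
        rw [log_re, log_im]
        exact add_le_add le_rfl (abs_arg_le_pi _)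

lemma intervalIntegrable_log_one_sub_mul_div (z : ℂ) :
    IntervalIntegrable (fun t : ℝ => log (1 - z * t) / t) volume 0 1 := by
  set t₀ : ℝ := min 1 (1 / (2 * (‖z‖ + 1)))
  have ht₀ : 0 < t₀ := by positivity
  have hnear : IntervalIntegrable (fun t : ℝ => log (1 - z * t) / t) volume 0 t₀ := by
    rw [intervalIntegrable_iff_integrableOn_Ioc_of_le ht₀.le]
    refine Measure.integrableOn_of_bounded (M := 3 / 2 * ‖z‖) measure_Ioc_lt_top.ne
      ((measurable_log.comp (by fun_prop)).div (by fun_prop)).aestronglyMeasurable ?_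
    refine (ae_restrict_iff' measurableSet_Ioc).2 (ae_of_all _ fun t ht => ?_)
    have hzt : ‖z * t‖ = ‖z‖ * t := by rw [norm_mul, norm_real, Real.norm_of_nonneg ht.1.le]
    have hsmall : ‖-(z * t)‖ ≤ 1 / 2 :=
      calc ‖-(z * t)‖ = ‖z‖ * t := by rw [norm_neg, hzt]
        _ ≤ (‖z‖ + 1) * (1 / (2 * (‖z‖ + 1))) :=
          mul_le_mul (by linarith) (ht.2.trans (min_le_right _ _)) ht.1.le (by positivity)
        _ = 1 / 2 := by field_simp
    have hlog := norm_log_one_add_half_le_self hsmall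
    rw [← sub_eq_add_neg, norm_neg, hzt] at hlog
    rw [norm_div, norm_real, Real.norm_of_nonneg ht.1.le, div_le_iff₀ ht.1]
    linarith
  have hinv : ContinuousOn (fun t : ℝ => (t : ℂ)⁻¹) (uIcc t₀ 1) := by
    rw [uIcc_of_le (min_le_left _ _ : t₀ ≤ 1)]
    exact continuous_ofReal.continuousOn.inv₀ fun t ht => ofReal_ne_zero.2 (ht₀.trans_le ht.1).ne'
  simpa only [div_eq_mul_inv] using
    hnear.trans ((intervalIntegrable_log_one_sub_mul z t₀ 1).mul_continuousOn hinv)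

lemma integral_inv_one_sub_mul {z : ℂ} (hz : 1 - z ∈ slitPlane) (hz0 : z ≠ 0) :
    ∫ t in (0:ℝ)..1, (1 - z * t)⁻¹ = -log (1 - z) / z := by
  have h := log_inv_eq_integral hz
  rw [log_inv _ (slitPlane_arg_ne_pi hz)] at h
  simp only [real_smul, mul_comm (ofReal _) z] at h
  rw [eq_div_iff hz0, mul_comm, ← h]

lemma hasDerivAt_log_one_sub_mul_div {x : ℂ} {t : ℝ} (hx : 1 - x * t ∈ slitPlane) (ht : t ≠ 0) :
    HasDerivAt (fun y : ℂ => log (1 - y * t) / t) (-(1 - x * t)⁻¹) x := by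
  refine (((hasDerivAt_log hx).comp x
    (((hasDerivAt_id x).mul_const (t : ℂ)).const_sub 1)).div_const (t : ℂ)).congr_deriv ?_
  field_simp [ofReal_ne_zero.2 ht]

lemma exists_ball_bound_inv_one_sub_mul {z : ℂ} (hz : 1 - z ∈ slitPlane) :
    ∃ ε > 0, ∃ C, ∀ x ∈ ball z ε,
      1 - x ∈ slitPlane ∧ ∀ t ∈ Icc (0:ℝ) 1, ‖(1 - x * t)⁻¹‖ ≤ C := by
  have hU : IsOpen {x : ℂ | 1 - x ∈ slitPlane} := isOpen_slitPlane.preimage (by fun_prop)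
  obtain ⟨ε, hε, hball⟩ := nhds_basis_closedBall.mem_iff.1 (hU.mem_nhds hz)
  obtain ⟨C, hC⟩ := ((isCompact_closedBall z ε).prod isCompact_Icc).exists_bound_of_continuousOn
    (f := fun p : ℂ × ℝ => (1 - p.1 * p.2)⁻¹) <| ContinuousOn.inv₀ (by fun_prop)
      fun p hp => slitPlane_ne_zero (one_sub_mul_ofReal_mem_slitPlane (hball hp.1) hp.2)
  exact ⟨ε, hε, C, fun x hx => ⟨hball (ball_subset_closedBall hx),
    fun t ht => hC (x, t) ⟨ball_subset_closedBall hx, ht⟩⟩⟩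

lemma hasDerivAt_Li2 {z : ℂ} (hz : 1 - z ∈ slitPlane) (hz0 : z ≠ 0) :
    HasDerivAt Li2 (-log (1 - z) / z) z := by
  obtain ⟨ε, hε, C, hC⟩ := exists_ball_bound_inv_one_sub_mul hz
  have hderiv := (hasDerivAt_integral_of_dominated_loc_of_deriv_le
    (F := fun x (t : ℝ) => log (1 - x * t) / t) (F' := fun x (t : ℝ) => -(1 - x * t)⁻¹)
    (bound := fun _ => C) (ball_mem_nhds z hε)
    (Eventually.of_forall fun x =>
      ((measurable_log.comp (by fun_prop)).div (by fun_prop)).aestronglyMeasurable)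
    (intervalIntegrable_log_one_sub_mul_div z)
    ((measurable_const.sub (by fun_prop)).inv.neg.aestronglyMeasurable)
    (ae_of_all _ fun t ht x hx => ?_) intervalIntegrable_const
    (ae_of_all _ fun t ht x hx => ?_)).2
  · have hLi2 : HasDerivAt Li2 (-∫ t in (0:ℝ)..1, -(1 - z * t)⁻¹) z := hderiv.neg
    rwa [intervalIntegral.integral_neg, neg_neg, integral_inv_one_sub_mul hz hz0] at hLi2
  · rw [uIoc_of_le zero_le_one] at ht
    rw [norm_neg]
    exact (hC x hx).2 t (Ioc_subset_Icc_self ht)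
  · rw [uIoc_of_le zero_le_one] at ht
    exact hasDerivAt_log_one_sub_mul_div
      (one_sub_mul_ofReal_mem_slitPlane (hC x hx).1 (Ioc_subset_Icc_self ht)) ht.1.ne'

lemma hasDerivAt_Li2_sub_Li2_one_sub_one_div {w : ℂ} (hw : 0 < w.im) :
    HasDerivAt (fun u => Li2 u - Li2 (1 - 1 / u) + log u * log (1 - u) - log u ^ 2 / 2) 0 w := by
  have hw0 : w ≠ 0 := by rintro rfl; simp at hw
  have hw1 : w ≠ 1 := by rintro rfl; simp at hw
  have hw' : 1 - w⁻¹ ≠ 0 := by rw [sub_ne_zero, ne_comm, inv_ne_one]; exact hw1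
  have hws : w ∈ slitPlane := mem_slitPlane_iff.2 (Or.inr hw.ne')
  have h1w : 1 - w ∈ slitPlane := one_sub_mem_slitPlane_of_im_ne_zero hw.ne'
  have h1w' : 1 - (1 - w⁻¹) ∈ slitPlane := by
    rw [← one_div]
    refine one_sub_mem_slitPlane_of_im_ne_zero ?_
    rw [im_one_sub_one_div]
    exact (div_pos hw (normSq_pos.2 hw0)).ne'
  have hlog : HasDerivAt log w⁻¹ w := hasDerivAt_log hws
  have hlog1 : HasDerivAt (fun u => log (1 - u)) (-(1 - w)⁻¹) w := by
    refine ((hasDerivAt_log h1w).comp w ((hasDerivAt_id w).const_sub 1)).congr_deriv ?_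
    ring
  simp only [one_div]
  refine ((((hasDerivAt_Li2 h1w hw0).sub ((hasDerivAt_Li2 h1w' hw').comp w
    ((hasDerivAt_inv hw0).const_sub 1))).add (hlog.mul hlog1)).sub
    ((hlog.pow 2).div_const 2)).congr_deriv ?_
  rw [sub_sub_cancel, log_inv _ (slitPlane_arg_ne_pi hws)]
  field_simp [sub_ne_zero.2 hw1, sub_ne_zero.2 hw1.symm]
  ring

lemma one_sub_exp_pi_div_three_mul_I :
    1 - exp (↑(π / 3) * I) = exp (↑(-(π / 3)) * I) := by
  rw [exp_mul_I, exp_mul_I, ← ofReal_cos, ← ofReal_sin, ← ofReal_cos, ← ofReal_sin,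
    Real.cos_neg, Real.sin_neg, Real.cos_pi_div_three]
  push_cast
  ring

lemma log_exp_ofReal_mul_I {x : ℝ} (hx : x ∈ Ioc (-π) π) : log (exp (x * I)) = x * I :=
  log_exp (by simpa using hx.1) (by simpa using hx.2)

theorem Li2_eq_Li2_one_sub_one_div {z : ℂ} (hz : 0 < z.im) :
    Li2 z = Li2 (1 - 1 / z) + π ^ 2 / 6 - log z * log (1 - z) + log z ^ 2 / 2 := by
  set g := fun u => Li2 u - Li2 (1 - 1 / u) + log u * log (1 - u) - log u ^ 2 / 2 with hg
  have hπ : 0 < π / 3 ∧ π / 3 < π := ⟨by positivity, by linarith [Real.pi_pos]⟩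
  set ζ := exp (↑(π / 3) * I)
  have hζ : 0 < ζ.im := by
    rw [exp_ofReal_mul_I_im]
    exact Real.sin_pos_of_pos_of_lt_pi hπ.1 hπ.2
  have h1ζ : 1 - ζ = exp (↑(-(π / 3)) * I) := one_sub_exp_pi_div_three_mul_I
  have hconst : g z = g ζ :=
    (isOpen_lt continuous_const continuous_im).is_const_of_deriv_eq_zero
      (convex_halfSpace_im_gt 0).isPreconnected
      (fun w hw =>
        (hasDerivAt_Li2_sub_Li2_one_sub_one_div hw).differentiableAt.differentiableWithinAt)
      (fun w hw => (hasDerivAt_Li2_sub_Li2_one_sub_one_div hw).deriv) hz hζ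
  have hfix : 1 - 1 / ζ = ζ := by
    rw [one_div, ← exp_neg, ← neg_mul, ← ofReal_neg, ← h1ζ, sub_sub_cancel]
  have hgζ : g ζ = π ^ 2 / 6 := by
    simp only [hg, hfix, h1ζ]
    rw [log_exp_ofReal_mul_I ⟨by linarith, hπ.2.le⟩,
      log_exp_ofReal_mul_I ⟨by linarith, by linarith⟩]
    push_cast
    linear_combination (-(π : ℂ) ^ 2 / 6) * I_sq
  simp only [hg] at hconst
  linear_combination hconst + hgζ

lemma blochWigner_eq_of_im_pos {z : ℂ} (hz : 0 < z.im) :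
    BlochWigner z = BlochWigner (1 - 1 / z) := by
  have hz0 : z ≠ 0 := by rintro rfl; simp at hz
  have hz1 : 1 - z ≠ 0 := by
    rw [sub_ne_zero]
    rintro rfl
    simp at hz
  have him := congrArg im (Li2_eq_Li2_one_sub_one_div hz)
  have hsq : (log z ^ 2 / 2).im = Real.log ‖z‖ * z.arg := by
    rw [← ofReal_ofNat, div_ofReal_im, sq, mul_im, log_re, log_im]
    ring
  have hnorm : Real.log ‖1 - 1 / z‖ = Real.log ‖1 - z‖ - Real.log ‖z‖ := by
    rw [← Real.log_div (norm_ne_zero_iff.2 hz1) (norm_ne_zero_iff.2 hz0), ← norm_div,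
      one_sub_div hz0, ← neg_sub, neg_div, norm_neg]
  rw [add_im, sub_im, add_im, mul_im, hsq, log_re, log_im, log_re, log_im] at him
  rw [BlochWigner, BlochWigner, him, hnorm, sub_sub_cancel, one_div,
    arg_inv, if_neg (slitPlane_arg_ne_pi (mem_slitPlane_iff.2 (Or.inr hz.ne')))]
  norm_cast
  ring

lemma Li2_conj {z : ℂ} (hz : 1 - z ∈ slitPlane) : Li2 (conj z) = conj (Li2 z) := by
  rw [Li2, Li2, map_neg, ← intervalIntegral_conj]
  congr 1
  refine integral_congr fun t ht => ?_
  rw [uIcc_of_le zero_le_one] at ht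
  have harg := slitPlane_arg_ne_pi (one_sub_mul_ofReal_mem_slitPlane hz ht)
  simp only [map_div₀, conj_ofReal, ← log_conj _ harg, map_sub, map_one, map_mul]

lemma blochWigner_conj {z : ℂ} (hz : 1 - z ∈ slitPlane) :
    BlochWigner (conj z) = -BlochWigner z := by
  have h1 : 1 - conj z = conj (1 - z) := by rw [map_sub, map_one]
  rw [BlochWigner, BlochWigner, Li2_conj hz, conj_im, h1, arg_conj,
    if_neg (slitPlane_arg_ne_pi hz), norm_conj]
  ring

lemma im_log_one_sub_ofReal_mul_div (x t : ℝ) :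
    RCLike.im (log (1 - x * t) / t) = arg ((1 - x * t : ℝ) : ℂ) / t := by
  rw [RCLike.im_to_complex, div_ofReal_im, log_im]
  push_cast
  rfl

lemma intervalIntegrable_arg_one_sub_mul_div (x : ℝ) :
    IntervalIntegrable (fun t : ℝ => arg ((1 - x * t : ℝ) : ℂ) / t) volume 0 1 := by
  have h := intervalIntegrable_log_one_sub_mul_div x
  have him : IntervalIntegrable (fun t : ℝ => RCLike.im (log (1 - x * t) / t)) volume 0 1 :=
    ⟨h.1.im, h.2.im⟩
  simpa only [im_log_one_sub_ofReal_mul_div] using him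

lemma im_Li2_ofReal (x : ℝ) : (Li2 x).im = -∫ t in (0:ℝ)..1, arg ((1 - x * t : ℝ) : ℂ) / t := by
  rw [Li2, neg_im, ← RCLike.im_to_complex,
    ← intervalIntegral_im (intervalIntegrable_log_one_sub_mul_div x)]
  simp only [im_log_one_sub_ofReal_mul_div]

lemma integral_arg_one_sub_mul_div_eq_zero {x a : ℝ} (ha : 0 ≤ a) (hxa : x * a ≤ 1) :
    ∫ t in (0:ℝ)..a, arg ((1 - x * t : ℝ) : ℂ) / t = 0 := by
  refine (integral_congr (g := fun _ => 0) fun t ht => ?_).trans integral_zero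
  rw [uIcc_of_le ha] at ht
  have hxt : x * t ≤ 1 := by rcases le_total 0 x with hx | hx <;> nlinarith [ht.1, ht.2]
  rw [arg_ofReal_of_nonneg (by linarith), zero_div]

lemma im_Li2_ofReal_of_one_lt {x : ℝ} (hx : 1 < x) : (Li2 x).im = -(π * Real.log x) := by
  have hx0 : 0 < x := by linarith
  have hc : x⁻¹ ∈ Icc (0:ℝ) 1 := ⟨by positivity, inv_le_one_of_one_le₀ hx.le⟩
  have hint := intervalIntegrable_arg_one_sub_mul_div x
  rw [im_Li2_ofReal, ← integral_add_adjacent_intervals (b := x⁻¹)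
    (hint.mono_set (uIcc_subset_uIcc_left (by simpa [uIcc_of_le zero_le_one] using hc)))
    (hint.mono_set (uIcc_subset_uIcc_right (by simpa [uIcc_of_le zero_le_one] using hc)))]
  rw [integral_arg_one_sub_mul_div_eq_zero hc.1 (mul_inv_cancel₀ hx0.ne').le, zero_add, neg_inj]
  calc ∫ t in x⁻¹..1, arg ((1 - x * t : ℝ) : ℂ) / t = ∫ t in x⁻¹..1, π * t⁻¹ := by
        refine integral_congr_ae (ae_of_all _ fun t ht => ?_)
        rw [uIoc_of_le hc.2] at ht
        have hxt : 1 < x * t := by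
          simpa [hx0.ne'] using mul_lt_mul_of_pos_left ht.1 hx0
        rw [arg_ofReal_of_neg (by linarith), div_eq_mul_inv]
    _ = π * Real.log x := by
        rw [intervalIntegral.integral_const_mul, integral_inv_of_pos (by positivity) one_pos,
          one_div, inv_inv]

lemma blochWigner_ofReal (x : ℝ) : BlochWigner x = 0 := by
  rw [BlochWigner, ← ofReal_one, ← ofReal_sub, norm_real]
  rcases le_or_gt x 1 with hx | hx
  · rw [im_Li2_ofReal, integral_arg_one_sub_mul_div_eq_zero zero_le_one (by linarith),
      arg_ofReal_of_nonneg (by linarith)]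
    simp
  · rw [im_Li2_ofReal_of_one_lt hx, arg_ofReal_of_neg (by linarith),
      Real.norm_of_nonneg (by linarith)]
    ring

theorem blochWigner_eq_of_inv_transform_general (z : ℂ) :
    BlochWigner z = BlochWigner (1 - 1 / z) := by
  rcases lt_trichotomy z.im 0 with hz | hz | hz
  · have hw : (1 - 1 / z).im ≠ 0 := by
      rw [im_one_sub_one_div]
      exact div_ne_zero hz.ne (normSq_pos.2 (by rintro rfl; simp at hz)).ne'
    have h := blochWigner_eq_of_im_pos (z := conj z) (by simpa using hz)
    rwa [show 1 - 1 / conj z = conj (1 - 1 / z) by simp, blochWigner_conj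
      (one_sub_mem_slitPlane_of_im_ne_zero hz.ne), blochWigner_conj
      (one_sub_mem_slitPlane_of_im_ne_zero hw), neg_inj] at h
  · obtain ⟨x, rfl⟩ : ∃ x : ℝ, (x : ℂ) = z := ⟨z.re, ext rfl hz.symm⟩
    rw [show 1 - 1 / (x : ℂ) = ((1 - 1 / x : ℝ) : ℂ) by push_cast; ring, blochWigner_ofReal,
      blochWigner_ofReal]
  · exact blochWigner_eq_of_im_pos hz

/-- For `z ∈ ℂ \ {0,1}`, the Bloch–Wigner function satisfies `D(z) = D(1 - 1/z)`. -/
theorem blochWigner_eq_of_inv_transform (z : ℂ) (h0 : z ≠ 0) (h1 : z ≠ 1) :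
    BlochWigner z = BlochWigner (1 - 1 / z) :=
  blochWigner_eq_of_inv_transform_general z
end

section
/- Let y = (y₁,…,y_N) be defined from a seed (x, ε, B) by y_j = ε_j · ∏_k x_k^{b_{kj}}. Then the mutation of the seed in direction k (with x̃_k = (ε_k/(1⊕ε_k))·x_k⁻¹·∏_{b_{jk}>0} x_j^{b_{jk}} + (1/(1⊕ε_k))·x_k⁻¹·∏_{b_{jk}<0} x_j^{−b_{jk}}, the coefficient mutation rule, and the matrix mutation rule) induces on y exactly the y-variable mutation rule: ỹ_k = y_k⁻¹, ỹ_i = y_i·(y_k/(1+y_k))^{b_{ki}} for b_{ki} ≥ 0, and ỹ_i = y_i·(1+y_k)^{−b_{ki}} for b_{ki} ≤ 0 (i ≠ k). -/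
/-!
Put `P = ∏_{b_{jk}>0} x_j^{b_{jk}}` and `M = ∏_{b_{jk}<0} x_j^{-b_{jk}}`. Then `y_k = ε_k P / M`
and `(1 ⊕ ε_k) x̃_k / M = (1 + y_k) / x_k`, whence also
`(ε_k / (1 ⊕ ε_k)) x̃_k⁻¹ P = x_k y_k / (1 + y_k)`. For `m, i ≠ k` the matrix mutation rule reads
`b'_{mi} = b_{mi} + [b_{mk}]_+ b_{ki}` if `b_{ki} ≥ 0` and `b'_{mi} = b_{mi} + [-b_{mk}]_+ b_{ki}`
if `b_{ki} ≤ 0`, so away from `x_k` the monomial of `ỹ_i` is that of `y_i` times `P^{b_{ki}}`,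
resp. `M^{b_{ki}}`. Collecting these with `x̃_k^{-b_{ki}}` and the coefficient factor of `ε̃_i`
gives exactly the two identities above, raised to the power `|b_{ki}|`.
-/

open Finset

/-- Matrix mutation in direction `k`. -/
def mutB {N : ℕ} (B : Fin N → Fin N → ℤ) (k : Fin N) : Fin N → Fin N → ℤ :=
  fun i j => if i = k ∨ j = k then -B i j
    else B i j + (|B i k| * B k j + B i k * |B k j|) / 2

/-- The `y`-variables attached to a seed `(x, ε, B)`: `y_j = ε_j · ∏_k x_k^{b_{kj}}`. -/
noncomputable def yOf {N : ℕ} {K : Type*} [Field K]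
    (B : Fin N → Fin N → ℤ) (ε x : Fin N → K) : Fin N → K :=
  fun j => ε j * ∏ m, x m ^ (B m j)

/-- Mutation of the cluster variables in direction `k` (with ambient addition `⊕ = oplus`
on coefficients):
`x̃_k = (ε_k/(1⊕ε_k))·x_k⁻¹·∏_{b_{jk}>0} x_j^{b_{jk}} + (1/(1⊕ε_k))·x_k⁻¹·∏_{b_{jk}<0} x_j^{−b_{jk}}`. -/
noncomputable def mutX {N : ℕ} {K : Type*} [Field K] (oplus : K → K → K)
    (B : Fin N → Fin N → ℤ) (ε x : Fin N → K) (k : Fin N) : Fin N → K :=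
  fun i => if i = k then
      (ε k / oplus 1 (ε k)) * (x k)⁻¹ *
        ∏ j, (if 0 < B j k then x j ^ (B j k).toNat else 1)
      + (1 / oplus 1 (ε k)) * (x k)⁻¹ *
        ∏ j, (if B j k < 0 then x j ^ (-(B j k)).toNat else 1)
    else x i

/-- Mutation of the coefficients in direction `k`:
`ε̃_k = ε_k⁻¹`, `ε̃_i = ε_i·(ε_k/(1⊕ε_k))^{b_{ki}}` if `b_{ki} ≥ 0` and
`ε̃_i = ε_i·(1⊕ε_k)^{−b_{ki}}` if `b_{ki} ≤ 0`. -/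
noncomputable def mutE {N : ℕ} {K : Type*} [Field K] (oplus : K → K → K)
    (B : Fin N → Fin N → ℤ) (ε : Fin N → K) (k : Fin N) : Fin N → K :=
  fun i => if i = k then (ε k)⁻¹
    else if 0 ≤ B k i then ε i * (ε k / oplus 1 (ε k)) ^ (B k i).toNat
    else ε i * (oplus 1 (ε k)) ^ (-(B k i)).toNat

section

variable {N : ℕ} {K : Type*} [Field K]

theorem ite_pos_pow_toNat (a : K) (b : ℤ) :
    (if 0 < b then a ^ b.toNat else 1) = a ^ b.toNat := by
  split_ifs with h
  · rfl
  · rw [Int.toNat_eq_zero.2 (not_lt.1 h), pow_zero]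

theorem zpow_eq_pow_toNat_div_pow_toNat_neg (a : K) (b : ℤ) :
    a ^ b = a ^ b.toNat / a ^ (-b).toNat := by
  rcases le_total 0 b with h | h
  · rw [Int.toNat_eq_zero.2 (neg_nonpos.2 h), pow_zero, div_one, ← zpow_natCast,
      Int.toNat_of_nonneg h]
  · rw [Int.toNat_eq_zero.2 h, pow_zero, one_div, ← zpow_natCast, ← zpow_neg,
      Int.toNat_of_nonneg (neg_nonneg.2 h), neg_neg]

theorem mutB_of_eq_or_eq (B : Fin N → Fin N → ℤ) {k i j : Fin N} (h : i = k ∨ j = k) :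
    mutB B k i j = -B i j :=
  if_pos h

theorem mutB_of_nonneg (B : Fin N → Fin N → ℤ) {k i j : Fin N} (hi : i ≠ k) (hj : j ≠ k)
    (h : 0 ≤ B k j) : mutB B k i j = B i j + (B i k).toNat * B k j := by
  have habs : |B i k| + B i k = 2 * (B i k).toNat := by
    rcases abs_cases (B i k) with ⟨h', _⟩ | ⟨h', _⟩ <;> omega
  rw [mutB, if_neg (by tauto), abs_of_nonneg h, ← add_mul, habs, mul_assoc,
    Int.mul_ediv_cancel_left _ two_ne_zero]

theorem mutB_of_nonpos (B : Fin N → Fin N → ℤ) {k i j : Fin N} (hi : i ≠ k) (hj : j ≠ k)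
    (h : B k j ≤ 0) : mutB B k i j = B i j + (-B i k).toNat * B k j := by
  have habs : |B i k| - B i k = 2 * (-B i k).toNat := by
    rcases abs_cases (B i k) with ⟨h', _⟩ | ⟨h', _⟩ <;> omega
  rw [mutB, if_neg (by tauto), abs_of_nonpos h, mul_neg, ← sub_eq_add_neg, ← sub_mul, habs,
    mul_assoc, Int.mul_ediv_cancel_left _ two_ne_zero]

/-- `∏_{b_{jk} > 0} x_j ^ b_{jk}`, the positive part being `Int.toNat`. -/
noncomputable def posMonomial (B : Fin N → Fin N → ℤ) (x : Fin N → K) (k : Fin N) : K :=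
  ∏ j, x j ^ (B j k).toNat

/-- `∏_{b_{jk} < 0} x_j ^ (-b_{jk})`. -/
noncomputable def negMonomial (B : Fin N → Fin N → ℤ) (x : Fin N → K) (k : Fin N) : K :=
  ∏ j, x j ^ (-B j k).toNat

theorem negMonomial_ne_zero (B : Fin N → Fin N → ℤ) {x : Fin N → K} (hx : ∀ i, x i ≠ 0)
    (k : Fin N) : negMonomial B x k ≠ 0 :=
  prod_ne_zero_iff.2 fun j _ => pow_ne_zero _ (hx j)

theorem yOf_eq_mul_posMonomial_div_negMonomial (B : Fin N → Fin N → ℤ) (ε x : Fin N → K)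
    (k : Fin N) : yOf B ε x k = ε k * (posMonomial B x k / negMonomial B x k) := by
  simp only [yOf, posMonomial, negMonomial, ← prod_div_distrib,
    ← zpow_eq_pow_toNat_div_pow_toNat_neg]

theorem yOf_eq_mul_zpow_mul_prod_erase (B : Fin N → Fin N → ℤ) (ε x : Fin N → K)
    (k i : Fin N) :
    yOf B ε x i = ε i * (x k ^ B k i * ∏ m ∈ univ.erase k, x m ^ B m i) := by
  rw [yOf, mul_prod_erase univ (fun m => x m ^ B m i) (mem_univ k)]

variable (oplus : K → K → K) (B : Fin N → Fin N → ℤ) (ε x : Fin N → K) (k : Fin N)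

theorem mutX_of_ne {i : Fin N} (hi : i ≠ k) : mutX oplus B ε x k i = x i :=
  if_neg hi

theorem mutX_self : mutX oplus B ε x k k =
    (ε k * posMonomial B x k + negMonomial B x k) / (oplus 1 (ε k) * x k) := by
  simp only [mutX, if_true, ite_pos_pow_toNat, ← neg_pos (a := B _ k), posMonomial,
    negMonomial]
  rw [div_eq_mul_inv _ (oplus 1 (ε k) * x k), mul_inv]
  ring

theorem mutE_self : mutE oplus B ε k k = (ε k)⁻¹ :=
  if_pos rfl

theorem mutE_of_nonneg {i : Fin N} (hi : i ≠ k) (h : 0 ≤ B k i) :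
    mutE oplus B ε k i = ε i * (ε k / oplus 1 (ε k)) ^ (B k i).toNat := by
  rw [mutE, if_neg hi, if_pos h]

theorem mutE_of_nonpos {i : Fin N} (hi : i ≠ k) (h : B k i ≤ 0) :
    mutE oplus B ε k i = ε i * oplus 1 (ε k) ^ (-B k i).toNat := by
  rcases h.lt_or_eq with h | h
  · rw [mutE, if_neg hi, if_neg h.not_ge]
  · rw [mutE_of_nonneg oplus B ε k hi h.ge, h]
    simp

theorem oplus_mul_mutX_self_div_negMonomial (hx : ∀ i, x i ≠ 0) (hop : oplus 1 (ε k) ≠ 0) :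
    oplus 1 (ε k) * mutX oplus B ε x k k / negMonomial B x k = (1 + yOf B ε x k) / x k := by
  have hM := negMonomial_ne_zero B hx k
  rw [mutX_self, yOf_eq_mul_posMonomial_div_negMonomial]
  field_simp [hx k]
  ring

theorem div_oplus_mul_inv_mutX_self_mul_posMonomial (hx : ∀ i, x i ≠ 0)
    (hop : oplus 1 (ε k) ≠ 0) :
    ε k / oplus 1 (ε k) * (mutX oplus B ε x k k)⁻¹ * posMonomial B x k =
      x k * (yOf B ε x k / (1 + yOf B ε x k)) := by
  have hM := negMonomial_ne_zero B hx k
  calc ε k / oplus 1 (ε k) * (mutX oplus B ε x k k)⁻¹ * posMonomial B x k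
      = ε k * (posMonomial B x k / negMonomial B x k) /
          (oplus 1 (ε k) * mutX oplus B ε x k k / negMonomial B x k) := by
        rw [mul_div_assoc', div_div_div_cancel_right₀ hM, div_eq_mul_inv _ (_ * _), mul_inv]
        ring
    _ = yOf B ε x k / ((1 + yOf B ε x k) / x k) := by
        rw [oplus_mul_mutX_self_div_negMonomial oplus B ε x k hx hop,
          yOf_eq_mul_posMonomial_div_negMonomial]
    _ = x k * (yOf B ε x k / (1 + yOf B ε x k)) := by
        rw [div_div_eq_mul_div]
        ring

theorem yOf_mut_self (hBkk : B k k = 0) :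
    yOf (mutB B k) (mutE oplus B ε k) (mutX oplus B ε x k) k = (yOf B ε x k)⁻¹ := by
  have hfactor (m : Fin N) :
      mutX oplus B ε x k m ^ mutB B k m k = (x m ^ B m k)⁻¹ := by
    rw [mutB_of_eq_or_eq B (Or.inr rfl), zpow_neg]
    rcases eq_or_ne m k with rfl | hm
    · rw [hBkk, zpow_zero, zpow_zero]
    · rw [mutX_of_ne oplus B ε x k hm]
  simp only [yOf, mutE_self, hfactor, prod_inv_distrib, mul_inv]

theorem yOf_mutX_eq_mul_zpow_mul_prod_erase (B' : Fin N → Fin N → ℤ) (ε' : Fin N → K)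
    (i : Fin N) :
    yOf B' ε' (mutX oplus B ε x k) i =
      ε' i * (mutX oplus B ε x k k ^ B' k i * ∏ m ∈ univ.erase k, x m ^ B' m i) := by
  rw [yOf_eq_mul_zpow_mul_prod_erase _ _ _ k]
  congr 2
  exact prod_congr rfl fun m hm => by rw [mutX_of_ne oplus B ε x k (ne_of_mem_erase hm)]

theorem prod_erase_zpow_mutB_of_nonneg (hx : ∀ i, x i ≠ 0) (hBkk : B k k = 0) {i : Fin N}
    (hi : i ≠ k) (h : 0 ≤ B k i) :
    ∏ m ∈ univ.erase k, x m ^ mutB B k m i =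
      (∏ m ∈ univ.erase k, x m ^ B m i) * posMonomial B x k ^ B k i := by
  rw [posMonomial, ← prod_erase univ (a := k) (by simp [hBkk]), ← prod_zpow,
    ← prod_mul_distrib]
  refine prod_congr rfl fun m hm => ?_
  rw [mutB_of_nonneg B (ne_of_mem_erase hm) hi h, zpow_add₀ (hx m), zpow_mul, zpow_natCast]

theorem prod_erase_zpow_mutB_of_nonpos (hx : ∀ i, x i ≠ 0) (hBkk : B k k = 0) {i : Fin N}
    (hi : i ≠ k) (h : B k i ≤ 0) :
    ∏ m ∈ univ.erase k, x m ^ mutB B k m i =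
      (∏ m ∈ univ.erase k, x m ^ B m i) * negMonomial B x k ^ B k i := by
  rw [negMonomial, ← prod_erase univ (a := k) (by simp [hBkk]), ← prod_zpow,
    ← prod_mul_distrib]
  refine prod_congr rfl fun m hm => ?_
  rw [mutB_of_nonpos B (ne_of_mem_erase hm) hi h, zpow_add₀ (hx m), zpow_mul, zpow_natCast]

theorem yOf_mut_of_nonneg (hx : ∀ i, x i ≠ 0) (hBkk : B k k = 0) (hop : oplus 1 (ε k) ≠ 0)
    {i : Fin N} (hi : i ≠ k) (h : 0 ≤ B k i) :
    yOf (mutB B k) (mutE oplus B ε k) (mutX oplus B ε x k) i =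
      yOf B ε x i * (yOf B ε x k / (1 + yOf B ε x k)) ^ (B k i).toNat := by
  obtain ⟨n, hn⟩ := Int.eq_ofNat_of_zero_le h
  have key := congrArg (· ^ n)
    (div_oplus_mul_inv_mutX_self_mul_posMonomial oplus B ε x k hx hop)
  simp only [mul_pow] at key
  rw [yOf_mutX_eq_mul_zpow_mul_prod_erase, mutB_of_eq_or_eq B (Or.inl rfl),
    mutE_of_nonneg oplus B ε k hi h,
    prod_erase_zpow_mutB_of_nonneg B x k hx hBkk hi h, yOf_eq_mul_zpow_mul_prod_erase B ε x k,
    hn, Int.toNat_natCast, zpow_neg, zpow_natCast, zpow_natCast, zpow_natCast]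
  linear_combination (ε i * ∏ m ∈ univ.erase k, x m ^ B m i) * key

theorem yOf_mut_of_nonpos (hx : ∀ i, x i ≠ 0) (hBkk : B k k = 0) (hop : oplus 1 (ε k) ≠ 0)
    {i : Fin N} (hi : i ≠ k) (h : B k i ≤ 0) :
    yOf (mutB B k) (mutE oplus B ε k) (mutX oplus B ε x k) i =
      yOf B ε x i * (1 + yOf B ε x k) ^ (-B k i).toNat := by
  obtain ⟨n, hn⟩ := Int.exists_eq_neg_ofNat h
  have key := congrArg (· ^ n) (oplus_mul_mutX_self_div_negMonomial oplus B ε x k hx hop)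
  simp only [div_pow, mul_pow] at key
  rw [yOf_mutX_eq_mul_zpow_mul_prod_erase, mutB_of_eq_or_eq B (Or.inl rfl),
    mutE_of_nonpos oplus B ε k hi h,
    prod_erase_zpow_mutB_of_nonpos B x k hx hBkk hi h, yOf_eq_mul_zpow_mul_prod_erase B ε x k,
    hn, neg_neg, Int.toNat_natCast, zpow_neg, zpow_neg, zpow_natCast, zpow_natCast,
    zpow_natCast]
  linear_combination (ε i * ∏ m ∈ univ.erase k, x m ^ B m i) * key

end

theorem y_mutation_from_seed_mutation_general {N : ℕ} {K : Type*} [Field K]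
    (oplus : K → K → K) (B : Fin N → Fin N → ℤ)
    (hskew : ∀ i j, B i j = -B j i) (ε x : Fin N → K) (k : Fin N)
    (hx : ∀ i, x i ≠ 0)
    (hop : oplus 1 (ε k) ≠ 0) :
    yOf (mutB B k) (mutE oplus B ε k) (mutX oplus B ε x k) k = (yOf B ε x k)⁻¹ ∧
    (∀ i, i ≠ k →
      (0 ≤ B k i →
        yOf (mutB B k) (mutE oplus B ε k) (mutX oplus B ε x k) i =
          yOf B ε x i * (yOf B ε x k / (1 + yOf B ε x k)) ^ (B k i).toNat) ∧
      (B k i ≤ 0 →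
        yOf (mutB B k) (mutE oplus B ε k) (mutX oplus B ε x k) i =
          yOf B ε x i * (1 + yOf B ε x k) ^ (-(B k i)).toNat)) := by
  have hBkk : B k k = 0 := by linarith [hskew k k]
  exact ⟨yOf_mut_self oplus B ε x k hBkk, fun i hi =>
    ⟨yOf_mut_of_nonneg oplus B ε x k hx hBkk hop hi,
      yOf_mut_of_nonpos oplus B ε x k hx hBkk hop hi⟩⟩

/-- Seed mutation induces exactly the `y`-variable mutation rule:
`ỹ_k = y_k⁻¹`, `ỹ_i = y_i·(y_k/(1+y_k))^{b_{ki}}` for `b_{ki} ≥ 0`, and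
`ỹ_i = y_i·(1+y_k)^{−b_{ki}}` for `b_{ki} ≤ 0` (`i ≠ k`). -/
theorem y_mutation_from_seed_mutation {N : ℕ} {K : Type*} [Field K]
    (oplus : K → K → K) (B : Fin N → Fin N → ℤ)
    (hskew : ∀ i j, B i j = -B j i) (ε x : Fin N → K) (k : Fin N)
    (hx : ∀ i, x i ≠ 0) (hε : ∀ i, ε i ≠ 0)
    (hop : oplus 1 (ε k) ≠ 0)
    (h1y : 1 + yOf B ε x k ≠ 0) :
    yOf (mutB B k) (mutE oplus B ε k) (mutX oplus B ε x k) k = (yOf B ε x k)⁻¹ ∧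
    (∀ i, i ≠ k →
      (0 ≤ B k i →
        yOf (mutB B k) (mutE oplus B ε k) (mutX oplus B ε x k) i =
          yOf B ε x i * (yOf B ε x k / (1 + yOf B ε x k)) ^ (B k i).toNat) ∧
      (B k i ≤ 0 →
        yOf (mutB B k) (mutE oplus B ε k) (mutX oplus B ε x k) i =
          yOf B ε x i * (1 + yOf B ε x k) ^ (-(B k i)).toNat)) :=
  y_mutation_from_seed_mutation_general oplus B hskew ε x k hx hop
end

section
/- Let y[k+1] = F_k(y[k]) where each F_k ∈ {R, L} acts on triples as R(y) = (y₃(1+y₁⁻¹)⁻², y₂(1+y₁)², y₁⁻¹) and L(y) = (y₁(1+y₂⁻¹)⁻², y₃(1+y₂)², y₂⁻¹). Define z[k] = −1/y[k]₁ if F_k = R and z[k] = −1/y[k]₂ if F_k = L. If F_{k−1}, F_k, F_{k+1} are all defined (2 ≤ k ≤ c−1) and F_{k−1} = F_k = F_{k+1} = R, then z[k+1]·(z″[k])²·z[k−1] = 1, where z″ = 1/(1−z). -/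
/-- The flip `R` on cluster `y`-variables of the once-punctured torus:
`R(y) = (y₃(1+y₁⁻¹)⁻², y₂(1+y₁)², y₁⁻¹)`. -/
noncomputable def Rflip {K : Type*} [Field K] (y : K × K × K) : K × K × K :=
  (y.2.2 * ((1 + y.1⁻¹) ^ 2)⁻¹, y.2.1 * (1 + y.1) ^ 2, y.1⁻¹)

/-- Gluing condition: for three consecutive steps of the `y`-pattern with
`F_{k−1} = F_k = F_{k+1} = R` and moduli `z[k] = −1/y[k]₁`, one has
`z[k+1]·(z″[k])²·z[k−1] = 1` where `z″ = 1/(1−z)`. -/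
theorem gluing_RRR {K : Type*} [Field K] (a b c : K × K × K)
    (hb : b = Rflip a) (hc : c = Rflip b)
    (ha1 : a.1 ≠ 0) (hb1 : b.1 ≠ 0) (hc1 : c.1 ≠ 0)
    (ha1' : 1 + a.1 ≠ 0) (hb1' : 1 + b.1 ≠ 0)
    (z1 z2 z3 : K)
    (hz1 : z1 = -a.1⁻¹) (hz2 : z2 = -b.1⁻¹) (hz3 : z3 = -c.1⁻¹)
    (hd : 1 - z2 ≠ 0) :
    z3 * ((1 - z2)⁻¹) ^ 2 * z1 = 1 := by
  have h2 : 1 + b.1⁻¹ ≠ 0 := by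
    rw [hz2, sub_neg_eq_add] at hd; exact hd
  have hc1' : c.1 = a.1⁻¹ * ((1 + b.1⁻¹) ^ 2)⁻¹ := by
    rw [hc, hb]; rfl
  have h3 : b.1 + 1 ≠ 0 := by
    intro h
    apply h2
    field_simp [hb1]
    linear_combination h
  rw [hz3, hc1', hz1, hz2, sub_neg_eq_add]
  field_simp
end

section
/- For the mapping class φ = RL² of the once-punctured torus, the periodicity condition x[4] = x[1] for the cluster pattern with initial cluster (x₁, x₂, x₃), trivial coefficients, and exchange matrix B = [[0,−2,2],[2,0,−2],[−2,2,0]], where R(x) = (x₃, x₂, (x₂² + x₃²)/x₁) and L(x) = (x₁, x₃, (x₁² + x₃²)/x₂), implies x₁ = x₃ and (x₂/x₃)⁴ + (x₂/x₃)² + 2 = 0. -/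
/-- The flip `R` on clusters of the once-punctured torus (trivial coefficients):
`R(x) = (x₃, x₂, (x₂² + x₃²)/x₁)`. -/
noncomputable def RflipX (x : ℂ × ℂ × ℂ) : ℂ × ℂ × ℂ :=
  (x.2.2, x.2.1, (x.2.1 ^ 2 + x.2.2 ^ 2) / x.1)

/-- The flip `L` on clusters of the once-punctured torus (trivial coefficients):
`L(x) = (x₁, x₃, (x₁² + x₃²)/x₂)`. -/
noncomputable def LflipX (x : ℂ × ℂ × ℂ) : ℂ × ℂ × ℂ :=
  (x.1, x.2.2, (x.1 ^ 2 + x.2.2 ^ 2) / x.2.1)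

/-!
The cluster `x[4] = L(L(R(x)))` has first entry `x₃`, so periodicity gives `x₁ = x₃`. Its
second entry is `(x₃² + y²)/x₂`, where `y = (x₂² + x₃²)/x₁` is the variable created by `R`;
with `x₁ = x₃`, clearing denominators in `(x₃² + y²)/x₂ = x₂` leaves the homogeneous quartic
`x₂⁴ + x₂²x₃² + 2x₃⁴ = 0`, which is the claim after division by `x₃⁴`.
-/

theorem LflipX_LflipX_RflipX (x1 x2 x3 : ℂ) :
    LflipX (LflipX (RflipX (x1, x2, x3))) =
      let y := (x2 ^ 2 + x3 ^ 2) / x1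
      let z := (x3 ^ 2 + y ^ 2) / x2
      (x3, z, (x3 ^ 2 + z ^ 2) / y) :=
  rfl

theorem div_pow_four_add_div_sq_add_two_eq_zero {K : Type*} [Field K] {b c : K}
    (hb : b ≠ 0) (hc : c ≠ 0) (h : (c ^ 2 + ((b ^ 2 + c ^ 2) / c) ^ 2) / b = b) :
    (b / c) ^ 4 + (b / c) ^ 2 + 2 = 0 := by
  have quartic : b ^ 4 + b ^ 2 * c ^ 2 + 2 * c ^ 4 = 0 := by
    field_simp at h
    linear_combination h
  field_simp
  linear_combination quartic

theorem RL2_periodicity_general (x1 x2 x3 : ℂ)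
    (h2 : x2 ≠ 0) (h3 : x3 ≠ 0)
    (X1 X2 X3 X4 : ℂ × ℂ × ℂ)
    (hX1 : X1 = (x1, x2, x3))
    (hX2 : X2 = RflipX X1) (hX3 : X3 = LflipX X2) (hX4 : X4 = LflipX X3)
    (hper : X4 = X1) :
    x1 = x3 ∧ (x2 / x3) ^ 4 + (x2 / x3) ^ 2 + 2 = 0 := by
  subst hX1 hX2 hX3 hX4
  rw [LflipX_LflipX_RflipX] at hper
  simp only [Prod.mk.injEq] at hper
  obtain ⟨rfl, hx2, -⟩ := hper
  exact ⟨rfl, div_pow_four_add_div_sq_add_two_eq_zero h2 h3 hx2⟩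

/-- For the mapping class `φ = RL²`, the periodicity condition `x[4] = x[1]` of the
cluster pattern with initial cluster `(x₁, x₂, x₃)` implies `x₁ = x₃` and
`(x₂/x₃)⁴ + (x₂/x₃)² + 2 = 0`. -/
theorem RL2_periodicity (x1 x2 x3 : ℂ)
    (h1 : x1 ≠ 0) (h2 : x2 ≠ 0) (h3 : x3 ≠ 0)
    (h23 : x2 ^ 2 + x3 ^ 2 ≠ 0)
    (X1 X2 X3 X4 : ℂ × ℂ × ℂ)
    (hX1 : X1 = (x1, x2, x3))
    (hX2 : X2 = RflipX X1) (hX3 : X3 = LflipX X2) (hX4 : X4 = LflipX X3)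
    (hper : X4 = X1) :
    x1 = x3 ∧ (x2 / x3) ^ 4 + (x2 / x3) ^ 2 + 2 = 0 :=
  RL2_periodicity_general x1 x2 x3 h2 h3 X1 X2 X3 X4 hX1 hX2 hX3 hX4 hper
end

section
/- With R and L acting on 6-tuples as for the 4-punctured sphere, and initial condition y[1] = (y, y, −1/y, −1/y, −1, −1) with y ≠ 0, the invariants y[k]_{i₁}·y[k]_{i₂}·y[k]_{i₃} = 1 hold for all k ≥ 1 and all (i₁,i₂,i₃) ∈ {1,2}×{3,4}×{5,6}, whenever the sequence y[k+1] = F_k(y[k]) (F_k ∈ {R,L}) is defined. -/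
/-- The flip `R` on cluster `y`-variables of the 4-punctured sphere (0-based indices). -/
noncomputable def R6 {K : Type*} [Field K] (y : Fin 6 → K) : Fin 6 → K :=
  ![y 4 * (1 + (y 0)⁻¹)⁻¹ * (1 + (y 1)⁻¹)⁻¹,
    y 5 * (1 + (y 0)⁻¹)⁻¹ * (1 + (y 1)⁻¹)⁻¹,
    y 2 * (1 + y 0) * (1 + y 1),
    y 3 * (1 + y 0) * (1 + y 1),
    (y 1)⁻¹, (y 0)⁻¹]

/-- The flip `L` on cluster `y`-variables of the 4-punctured sphere (0-based indices). -/
noncomputable def L6 {K : Type*} [Field K] (y : Fin 6 → K) : Fin 6 → K :=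
  ![y 0 * (1 + (y 2)⁻¹)⁻¹ * (1 + (y 3)⁻¹)⁻¹,
    y 1 * (1 + (y 2)⁻¹)⁻¹ * (1 + (y 3)⁻¹)⁻¹,
    y 4 * (1 + y 2) * (1 + y 3),
    y 5 * (1 + y 2) * (1 + y 3),
    (y 3)⁻¹, (y 2)⁻¹]

lemma inv_one_add_inv_mul {K : Type*} [Field K] (a : K) (ha : a ≠ 0) (h0 : 1 + a ≠ 0) :
    (1 + a⁻¹)⁻¹ * (1 + a) = a := by
  have h : 1 + a⁻¹ = (1 + a) * a⁻¹ := by field_simp; ring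
  rw [h, mul_inv, inv_inv, mul_assoc, mul_comm a (1 + a), ← mul_assoc,
    inv_mul_cancel₀ h0, one_mul]

lemma vec6_four {K : Type*} (a b c d e f : K) : ![a,b,c,d,e,f] 4 = e := rfl

lemma vec6_five {K : Type*} (a b c d e f : K) : ![a,b,c,d,e,f] 5 = f := rfl

lemma tri {K : Type*} [Field K] (a b c e : K) (ha : a ≠ 0) (hb : b ≠ 0)
    (h0 : 1 + a ≠ 0) (h1 : 1 + b ≠ 0) (hinv : a * c * e = 1) :
    e * (1 + a⁻¹)⁻¹ * (1 + b⁻¹)⁻¹ * (c * (1 + a) * (1 + b)) * b⁻¹ = 1 := by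
  calc e * (1 + a⁻¹)⁻¹ * (1 + b⁻¹)⁻¹ * (c * (1 + a) * (1 + b)) * b⁻¹
      = (e * c) * ((1 + a⁻¹)⁻¹ * (1 + a)) * ((1 + b⁻¹)⁻¹ * (1 + b)) * b⁻¹ := by ring
    _ = 1 := by
        rw [inv_one_add_inv_mul a ha h0, inv_one_add_inv_mul b hb h1]
        field_simp
        linear_combination hinv

/-- For the `y`-pattern of the 4-punctured sphere with initial condition
`y[1] = (y, y, −1/y, −1/y, −1, −1)`, the invariants
`y[k]_{i₁}·y[k]_{i₂}·y[k]_{i₃} = 1` hold for all `k ≥ 1` and all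
`(i₁,i₂,i₃) ∈ {1,2}×{3,4}×{5,6}` (0-based: `{0,1}×{2,3}×{4,5}`),
whenever the sequence `y[k+1] = F_k(y[k])` (`F_k ∈ {R,L}`) is defined. -/
theorem y_pattern_invariants {K : Type*} [Field K] (yv : K) (hyv : yv ≠ 0)
    (y : ℕ → Fin 6 → K)
    (hinit : y 1 = ![yv, yv, -yv⁻¹, -yv⁻¹, -1, -1])
    (F : ℕ → ((Fin 6 → K) → (Fin 6 → K)))
    (hF : ∀ k, F k = R6 ∨ F k = L6)
    (hrec : ∀ k ≥ 1, y (k + 1) = F k (y k))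
    (hnz : ∀ k ≥ 1, ∀ i, y k i ≠ 0)
    (hden : ∀ k ≥ 1,
      (F k = R6 → 1 + y k 0 ≠ 0 ∧ 1 + y k 1 ≠ 0) ∧
      (F k = L6 → 1 + y k 2 ≠ 0 ∧ 1 + y k 3 ≠ 0)) :
    ∀ k ≥ 1, ∀ i₁ ∈ ({0, 1} : Set (Fin 6)), ∀ i₂ ∈ ({2, 3} : Set (Fin 6)),
      ∀ i₃ ∈ ({4, 5} : Set (Fin 6)), y k i₁ * y k i₂ * y k i₃ = 1 := by
  intro k hk
  induction k, hk using Nat.le_induction with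
  | base =>
    intro i₁ hi₁ i₂ hi₂ i₃ hi₃
    simp only [Set.mem_insert_iff, Set.mem_singleton_iff] at hi₁ hi₂ hi₃
    rcases hi₁ with rfl | rfl <;> rcases hi₂ with rfl | rfl <;> rcases hi₃ with rfl | rfl <;>
      simp [hinit, vec6_four, vec6_five] <;> field_simp
  | succ k hk IH =>
    have h := hnz k hk
    have hrw := hrec k hk
    have I024 := IH 0 (by simp) 2 (by simp) 4 (by simp)
    have I025 := IH 0 (by simp) 2 (by simp) 5 (by simp)
    have I034 := IH 0 (by simp) 3 (by simp) 4 (by simp)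
    have I035 := IH 0 (by simp) 3 (by simp) 5 (by simp)
    have I124 := IH 1 (by simp) 2 (by simp) 4 (by simp)
    have I125 := IH 1 (by simp) 2 (by simp) 5 (by simp)
    have I134 := IH 1 (by simp) 3 (by simp) 4 (by simp)
    have I135 := IH 1 (by simp) 3 (by simp) 5 (by simp)
    intro i₁ hi₁ i₂ hi₂ i₃ hi₃
    simp only [Set.mem_insert_iff, Set.mem_singleton_iff] at hi₁ hi₂ hi₃
    rcases hF k with hFk | hFk
    · obtain ⟨h0, h1⟩ := (hden k hk).1 hFk
      rw [hrw, hFk]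
      rcases hi₁ with rfl | rfl <;> rcases hi₂ with rfl | rfl <;> rcases hi₃ with rfl | rfl <;>
        simp only [R6, Matrix.cons_val_zero, Matrix.cons_val_one, Matrix.head_cons,
          Matrix.cons_val_two, Matrix.tail_cons, Matrix.cons_val_three,
          Matrix.cons_val_four, Matrix.cons_val_fin_one, vec6_four, vec6_five]
      · linear_combination tri (y k 0) (y k 1) (y k 2) (y k 4) (h 0) (h 1) h0 h1 (by linear_combination I024)
      · linear_combination tri (y k 1) (y k 0) (y k 2) (y k 4) (h 1) (h 0) h1 h0 (by linear_combination I124)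
      · linear_combination tri (y k 0) (y k 1) (y k 3) (y k 4) (h 0) (h 1) h0 h1 (by linear_combination I034)
      · linear_combination tri (y k 1) (y k 0) (y k 3) (y k 4) (h 1) (h 0) h1 h0 (by linear_combination I134)
      · linear_combination tri (y k 0) (y k 1) (y k 2) (y k 5) (h 0) (h 1) h0 h1 (by linear_combination I025)
      · linear_combination tri (y k 1) (y k 0) (y k 2) (y k 5) (h 1) (h 0) h1 h0 (by linear_combination I125)
      · linear_combination tri (y k 0) (y k 1) (y k 3) (y k 5) (h 0) (h 1) h0 h1 (by linear_combination I035)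
      · linear_combination tri (y k 1) (y k 0) (y k 3) (y k 5) (h 1) (h 0) h1 h0 (by linear_combination I135)
    · obtain ⟨h2, h3⟩ := (hden k hk).2 hFk
      rw [hrw, hFk]
      rcases hi₁ with rfl | rfl <;> rcases hi₂ with rfl | rfl <;> rcases hi₃ with rfl | rfl <;>
        simp only [L6, Matrix.cons_val_zero, Matrix.cons_val_one, Matrix.head_cons,
          Matrix.cons_val_two, Matrix.tail_cons, Matrix.cons_val_three,
          Matrix.cons_val_four, Matrix.cons_val_fin_one, vec6_four, vec6_five]
      · linear_combination tri (y k 2) (y k 3) (y k 4) (y k 0) (h 2) (h 3) h2 h3 (by linear_combination I024)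
      · linear_combination tri (y k 3) (y k 2) (y k 4) (y k 0) (h 3) (h 2) h3 h2 (by linear_combination I034)
      · linear_combination tri (y k 2) (y k 3) (y k 5) (y k 0) (h 2) (h 3) h2 h3 (by linear_combination I025)
      · linear_combination tri (y k 3) (y k 2) (y k 5) (y k 0) (h 3) (h 2) h3 h2 (by linear_combination I035)
      · linear_combination tri (y k 2) (y k 3) (y k 4) (y k 1) (h 2) (h 3) h2 h3 (by linear_combination I124)
      · linear_combination tri (y k 3) (y k 2) (y k 4) (y k 1) (h 3) (h 2) h3 h2 (by linear_combination I134)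
      · linear_combination tri (y k 2) (y k 3) (y k 5) (y k 1) (h 2) (h 3) h2 h3 (by linear_combination I125)
      · linear_combination tri (y k 3) (y k 2) (y k 5) (y k 1) (h 3) (h 2) h3 h2 (by linear_combination I135)
end

section
/- Under the y-pattern recursion y[k+1] = R(y[k]) for the 4-punctured sphere with initial condition y[1] = (y, y, −1/y, −1/y, −1, −1), define z_i[k] = −1/y[k]_i for i = 1,2 when F_k = R, and let z″ = 1/(1−z). Then the bottom gluing equation z₂[2]·z₁″[1]·z₂″[1] = 1 holds. -/
section R6

variable {K : Type*} [Field K]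

theorem R6_apply_one (y : Fin 6 → K) :
    R6 y 1 = y 5 * (1 + (y 0)⁻¹)⁻¹ * (1 + (y 1)⁻¹)⁻¹ :=
  rfl

theorem inv_R6_apply_one (y : Fin 6 → K) :
    (R6 y 1)⁻¹ = (y 5)⁻¹ * (1 + (y 0)⁻¹) * (1 + (y 1)⁻¹) := by
  rw [R6_apply_one, mul_inv, mul_inv, inv_inv, inv_inv]

end R6

theorem bottom_gluing_general {K : Type*} [Field K] (yv : K)
    (h1 : 1 + yv⁻¹ ≠ 0)
    (y1 y2 : Fin 6 → K)
    (hy1 : y1 = ![yv, yv, -yv⁻¹, -yv⁻¹, -1, -1])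
    (hy2 : y2 = R6 y1)
    (z11 z21 z22 : K)
    (hz11 : z11 = -(y1 0)⁻¹) (hz21 : z21 = -(y1 1)⁻¹) (hz22 : z22 = -(y2 1)⁻¹) :
    z22 * (1 - z11)⁻¹ * (1 - z21)⁻¹ = 1 := by
  subst hy1 hy2 hz11 hz21 hz22
  have hz22_eq : -(R6 ![yv, yv, -yv⁻¹, -yv⁻¹, -1, -1] 1)⁻¹ = (1 + yv⁻¹) * (1 + yv⁻¹) := by
    rw [inv_R6_apply_one]
    simp only [Matrix.cons_val, Matrix.cons_val_zero, Matrix.cons_val_one, inv_neg, inv_one]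
    ring
  have hz'' : (1 : K) - -yv⁻¹ = 1 + yv⁻¹ := sub_neg_eq_add 1 yv⁻¹
  simp only [Matrix.cons_val_zero, Matrix.cons_val_one]
  rw [hz22_eq, hz'', mul_inv_cancel_right₀ h1, mul_inv_cancel₀ h1]

/-- Bottom gluing equation `z₂[2]·z₁″[1]·z₂″[1] = 1` for the 4-punctured sphere
`y`-pattern with initial condition `y[1] = (y, y, −1/y, −1/y, −1, −1)` and
`y[2] = R(y[1])`, where `z_i[k] = −1/y[k]_i` and `z″ = 1/(1−z)`. -/
theorem bottom_gluing {K : Type*} [Field K] (yv : K) (hyv : yv ≠ 0)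
    (h1 : 1 + yv⁻¹ ≠ 0)
    (y1 y2 : Fin 6 → K)
    (hy1 : y1 = ![yv, yv, -yv⁻¹, -yv⁻¹, -1, -1])
    (hy2 : y2 = R6 y1)
    (z11 z21 z22 : K)
    (hz11 : z11 = -(y1 0)⁻¹) (hz21 : z21 = -(y1 1)⁻¹) (hz22 : z22 = -(y2 1)⁻¹)
    (hd1 : 1 - z11 ≠ 0) (hd2 : 1 - z21 ≠ 0) :
    z22 * (1 - z11)⁻¹ * (1 - z21)⁻¹ = 1 :=
  bottom_gluing_general yv h1 y1 y2 hy1 hy2 z11 z21 z22 hz11 hz21 hz22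
end

section
/- Under the y-pattern recursion for the 4-punctured sphere with F₁ = F₂ = F₃ = R (i.e., y[2] = R(y[1]), y[3] = R(y[2])), and z_i[k] = −1/y[k]_i, with initial condition y[1] = (y, y, −1/y, −1/y, −1, −1) (so that y[1] satisfies invariants of the type y[1]₁y[1]₃y[1]₅ = 1), the gluing identity z₁[3]·(1/(1−z₁[2]))·(1/(1−z₂[2]))·z₂[1] = 1 holds. -/
/-- The gluing identity `z₁[3]·(1/(1−z₁[2]))·(1/(1−z₂[2]))·z₂[1] = 1` for the
4-punctured sphere `y`-pattern with `y[2] = R(y[1])`, `y[3] = R(y[2])`, moduli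
`z_i[k] = −1/y[k]_i`, and initial condition `y[1] = (y,y,−1/y,−1/y,−1,−1)`. -/
theorem second_gluing {K : Type*} [Field K] (yv : K) (hyv : yv ≠ 0)
    (h1 : 1 + yv⁻¹ ≠ 0)
    (y1 y2 y3 : Fin 6 → K)
    (hy1 : y1 = ![yv, yv, -yv⁻¹, -yv⁻¹, -1, -1])
    (hy2 : y2 = R6 y1) (hy3 : y3 = R6 y2)
    (hnz20 : y2 0 ≠ 0) (hnz21 : y2 1 ≠ 0) (hnz30 : y3 0 ≠ 0)
    (z13 z12 z22 z21 : K)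
    (hz13 : z13 = -(y3 0)⁻¹) (hz12 : z12 = -(y2 0)⁻¹)
    (hz22 : z22 = -(y2 1)⁻¹) (hz21 : z21 = -(y1 1)⁻¹)
    (hd1 : 1 - z12 ≠ 0) (hd2 : 1 - z22 ≠ 0) :
    z13 * (1 - z12)⁻¹ * (1 - z22)⁻¹ * z21 = 1 := by
  set a : K := 1 + yv⁻¹ with ha_def
  have e11 : y1 1 = yv := by rw [hy1]; rfl
  have e20 : y2 0 = -(a⁻¹ * a⁻¹) := by
    rw [hy2, hy1]; show (-1 : K) * _ * _ = _; simp [ha_def]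
  have e21 : y2 1 = -(a⁻¹ * a⁻¹) := by
    rw [hy2, hy1]; show (-1 : K) * _ * _ = _; simp [ha_def]
  have e24 : y2 4 = yv⁻¹ := by rw [hy2, hy1]; rfl
  have e2inv : (y2 0)⁻¹ = -(a * a) := by
    rw [e20, inv_neg, mul_inv, inv_inv]
  have e2inv' : (y2 1)⁻¹ = -(a * a) := by
    rw [e21, inv_neg, mul_inv, inv_inv]
  set b : K := 1 - a * a with hb_def
  have hb : b ≠ 0 := by
    rw [hz12, e2inv] at hd1; simpa [hb_def, sub_eq_add_neg] using hd1
  have e30 : y3 0 = yv⁻¹ * b⁻¹ * b⁻¹ := by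
    rw [hy3]
    show y2 4 * (1 + (y2 0)⁻¹)⁻¹ * (1 + (y2 1)⁻¹)⁻¹ = _
    rw [e24, e2inv, e2inv']
    congr 2 <;> rw [hb_def] <;> ring_nf
  rw [hz13, hz12, hz22, hz21, e30, e2inv, e2inv', e11]
  have : (1 : K) - -(-(a * a)) = b := by rw [hb_def]; ring
  rw [this]
  field_simp
end
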